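/- arXiv:2004.03816 — 3 statements merged into one kernel-verified Lean document; each statement's English description precedes it below -/
import Mathlib

section
/- (Dependent-sum bound, eq. (5.7) in the proof of Lemma 2.) Let F = { i ∈ [n] : π(i)=i } be the set of fixed points of π, with |F| = βn. Fix a vertex u ∈ [n], and for i ∈ [n] \ (F ∪ {u, π^{−1}(u)}) set Y_i = A1(u,i)·B1(u,π(i)). Then P( Σ_i Y_i ≤ y_min ) ≤ n^{−8/3}, where y_min = (n(1−β)−2)·p²·s² − 5·√(n·p²·s²·log n) − (25/3)·log n. (The variables Y_i each have distribution Bernoulli(p²s²), and Y_i is dependent on Y_{i'} only when i' = π(i) or i' = π^{−1}(i).) -/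
/-!
Write `Y_i = A1(u,i) B1(u,π i)`. Within a set `C` of indices with `π(C) ∩ C = ∅` that avoids `u`
and `π⁻¹ u`, the edges `{u,i}` and `{u,π i}` (`i ∈ C`) are pairwise distinct, so the `Y_i`,
`i ∈ C`, are independent `Bernoulli(p²s²)` and `E[exp(-θ Σ_C Y_i)] = (1 + (e^{-θ} - 1)p²s²)^|C|`.
The graph `i ~ π i` has maximum degree two, so it is properly 3-colourable; Hölder's inequality
`E[XYZ]⁴ ≤ E[X⁴] E[Y⁴] E[Z⁴]` over the three colour classes, together with Markov's inequality,
gives the Chernoff bound `P(Σ_I Y_i ≤ c)⁴ ≤ exp(θc) (1 + (e^{-θ} - 1)p²s²)^|I|`. For the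
deviation `t = 5 √(n p²s² log n) + (25/3) log n` and `θ = t / (n p²s²)` the exponent is at most
`-t² / (2 n p²s²) ≤ -(32/3) log n`.
-/

open scoped Classical
open Finset

namespace SeededGraphMatching

/-- Sample space of the correlated Erdős–Rényi model `𝒢(n,p;s)`: for each unordered pair
`e` of vertices there is a triple `(X_e, S_e, T_e)` of Booleans. -/
abbrev ESpace (n : ℕ) := Sym2 (Fin n) → Bool × Bool × Bool

/-- Probability weight of a single triple: `X_e ~ Bern(p)`, `S_e ~ Bern(s)`, `T_e ~ Bern(s)`,
all independent. -/
noncomputable def wt (p s : ℝ) (b : Bool × Bool × Bool) : ℝ :=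
  (if b.1 then p else 1 - p) * (if b.2.1 then s else 1 - s) * (if b.2.2 then s else 1 - s)

/-- Probability of an elementary outcome (product of independent Bernoullis). -/
noncomputable def prOmega (n : ℕ) (p s : ℝ) (ω : ESpace n) : ℝ :=
  ∏ e : Sym2 (Fin n), wt p s (ω e)

/-- Probability of an event. -/
noncomputable def Pr (n : ℕ) (p s : ℝ) (E : Set (ESpace n)) : ℝ :=
  ∑ ω : ESpace n, E.indicator (prOmega n p s) ω

/-- `G1` contains the edge `e = {i,j}` (for `i ≠ j`) iff `X_e = 1` and `S_e = 1`. -/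
def G1 (n : ℕ) (ω : ESpace n) : SimpleGraph (Fin n) where
  Adj i j := i ≠ j ∧ (ω s(i, j)).1 = true ∧ (ω s(i, j)).2.1 = true
  symm := by
    constructor
    intro i j h
    refine ⟨h.1.symm, ?_, ?_⟩
    · rw [Sym2.eq_swap]; exact h.2.1
    · rw [Sym2.eq_swap]; exact h.2.2
  loopless := ⟨fun i h => h.1 rfl⟩

/-- `G2` contains the edge `e = {i,j}` (for `i ≠ j`) iff `X_e = 1` and `T_e = 1`. -/
def G2 (n : ℕ) (ω : ESpace n) : SimpleGraph (Fin n) where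
  Adj i j := i ≠ j ∧ (ω s(i, j)).1 = true ∧ (ω s(i, j)).2.2 = true
  symm := by
    constructor
    intro i j h
    refine ⟨h.1.symm, ?_, ?_⟩
    · rw [Sym2.eq_swap]; exact h.2.1
    · rw [Sym2.eq_swap]; exact h.2.2
  loopless := ⟨fun i h => h.1 rfl⟩

/-- Number of fixed points of the seed permutation `π`. -/
def fixedCount (n : ℕ) (π : Equiv.Perm (Fin n)) : ℕ :=
  (univ.filter fun i => π i = i).card

/-- 0/1 adjacency indicator of `G1`. -/
noncomputable def A1 (n : ℕ) (ω : ESpace n) (u i : Fin n) : ℝ :=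
  if (G1 n ω).Adj u i then 1 else 0

/-- 0/1 adjacency indicator of `G2`. -/
noncomputable def B1 (n : ℕ) (ω : ESpace n) (u i : Fin n) : ℝ :=
  if (G2 n ω).Adj u i then 1 else 0

/-- 1-hop witness count: `W1(u,v) = Σ_i A1(u,i) · B1(v,π(i))`. -/
noncomputable def W1 (n : ℕ) (π : Equiv.Perm (Fin n)) (ω : ESpace n) (u v : Fin n) : ℝ :=
  ∑ i : Fin n, A1 n ω u i * B1 n ω v (π i)

lemma sum_mul_mul_mul_pow_four_le {α : Type*} (S : Finset α) {μ : α → ℝ}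
    (hμ : ∀ x ∈ S, 0 ≤ μ x) (hμ₁ : ∑ x ∈ S, μ x = 1) (X Y Z : α → ℝ) :
    (∑ x ∈ S, μ x * (X x * Y x * Z x)) ^ 4 ≤
      (∑ x ∈ S, μ x * X x ^ 4) * ((∑ x ∈ S, μ x * Y x ^ 4) * ∑ x ∈ S, μ x * Z x ^ 4) := by
  have hX : (∑ x ∈ S, μ x * (X x * Y x * Z x)) ^ 2 ≤
      (∑ x ∈ S, μ x * X x ^ 2) * ∑ x ∈ S, μ x * (Y x ^ 2 * Z x ^ 2) :=
    sum_sq_le_sum_mul_sum_of_sq_le_mul S (fun x hx => mul_nonneg (hμ x hx) (sq_nonneg _))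
      (fun x hx => mul_nonneg (hμ x hx) (by positivity)) (fun x _ => le_of_eq (by ring))
  have hX2 : (∑ x ∈ S, μ x * X x ^ 2) ^ 2 ≤ ∑ x ∈ S, μ x * X x ^ 4 := by
    simpa [hμ₁] using sum_sq_le_sum_mul_sum_of_sq_le_mul S (r := fun x => μ x * X x ^ 2)
      (fun x hx => mul_nonneg (hμ x hx) (by positivity)) hμ (fun x _ => le_of_eq (by ring))
  have hYZ : (∑ x ∈ S, μ x * (Y x ^ 2 * Z x ^ 2)) ^ 2 ≤
      (∑ x ∈ S, μ x * Y x ^ 4) * ∑ x ∈ S, μ x * Z x ^ 4 :=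
    sum_sq_le_sum_mul_sum_of_sq_le_mul S (fun x hx => mul_nonneg (hμ x hx) (by positivity))
      (fun x hx => mul_nonneg (hμ x hx) (by positivity)) (fun x _ => le_of_eq (by ring))
  calc (∑ x ∈ S, μ x * (X x * Y x * Z x)) ^ 4
      = ((∑ x ∈ S, μ x * (X x * Y x * Z x)) ^ 2) ^ 2 := by ring
    _ ≤ (∑ x ∈ S, μ x * X x ^ 2) ^ 2 * (∑ x ∈ S, μ x * (Y x ^ 2 * Z x ^ 2)) ^ 2 := by
      rw [← mul_pow]; exact pow_le_pow_left₀ (sq_nonneg _) hX 2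
    _ ≤ _ := mul_le_mul hX2 hYZ (sq_nonneg _)
      (sum_nonneg fun x hx => mul_nonneg (hμ x hx) (by positivity))

lemma exists_fin_three_coloring {α : Type*} (π : Equiv.Perm α) (I : Finset α) :
    ∃ f : α → Fin 3, ∀ i ∈ I, π i ∈ I → π i ≠ i → f (π i) ≠ f i := by
  induction I using Finset.induction_on with
  | empty => exact ⟨fun _ => 0, by simp⟩
  | @insert x t hx ih =>
    obtain ⟨f, hf⟩ := ih
    obtain ⟨c, -, hc⟩ := exists_mem_notMem_of_card_lt_card (s := {f (π x), f (π.symm x)})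
      (t := univ) (card_le_two.trans_lt (by simp))
    simp only [mem_insert, mem_singleton, not_or] at hc
    refine ⟨Function.update f x c, fun i hi hπi hne => ?_⟩
    by_cases hix : i = x
    · subst hix
      have hπt : π i ∈ t := (mem_insert.mp hπi).resolve_left hne
      rw [Function.update_self, Function.update_of_ne (ne_of_mem_of_not_mem hπt hx)]
      exact Ne.symm hc.1
    by_cases hπix : π i = x
    · rw [hπix, Function.update_self, Function.update_of_ne hix, π.eq_symm_apply.mpr hπix]
      exact hc.2
    rw [Function.update_of_ne hπix, Function.update_of_ne hix]
    exact hf i ((mem_insert.mp hi).resolve_left hix) ((mem_insert.mp hπi).resolve_left hπix) hne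

lemma exp_neg_le_one_sub_add_sq_div_two {x : ℝ} (hx : 0 ≤ x) :
    Real.exp (-x) ≤ 1 - x + x ^ 2 / 2 := by
  rw [Real.exp_neg, inv_le_iff_one_le_mul₀ (Real.exp_pos x)]
  nlinarith [Real.quadratic_le_exp_of_nonneg hx, sq_nonneg (x ^ 2)]

lemma one_add_exp_neg_sub_one_mul_pow_le {a θ : ℝ} (ha₀ : 0 ≤ a) (ha₁ : a ≤ 1) (hθ : 0 ≤ θ)
    (m : ℕ) : (1 + (Real.exp (-θ) - 1) * a) ^ m ≤ Real.exp (m * (a * (θ ^ 2 / 2 - θ))) := by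
  have hbase : 0 ≤ 1 + (Real.exp (-θ) - 1) * a := by nlinarith [Real.exp_pos (-θ)]
  rw [Real.exp_nat_mul]
  refine pow_le_pow_left₀ hbase ?_ m
  calc 1 + (Real.exp (-θ) - 1) * a ≤ Real.exp ((Real.exp (-θ) - 1) * a) := by
        linarith [Real.add_one_le_exp ((Real.exp (-θ) - 1) * a)]
    _ ≤ Real.exp (a * (θ ^ 2 / 2 - θ)) :=
        Real.exp_le_exp.mpr (by nlinarith [exp_neg_le_one_sub_add_sq_div_two hθ])

/-- The exponent of the Chernoff bound at its minimising parameter `θ = t / (N a)`. -/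
lemma chernoff_exponent_le {N a m c t : ℝ} (hNa : 0 < N * a) (ha : 0 ≤ a) (hm : m ≤ N)
    (ht : 0 ≤ t) (hc : c ≤ m * a - t) :
    t / (N * a) * c + m * (a * ((t / (N * a)) ^ 2 / 2 - t / (N * a))) ≤
      -(t ^ 2 / (2 * (N * a))) := by
  set θ := t / (N * a) with hθ
  have hθ₀ : 0 ≤ θ := by positivity
  have hθt : N * a * θ = t := by rw [hθ, mul_div_cancel₀ t hNa.ne']
  have hrhs : t ^ 2 / (2 * (N * a)) = N * a * θ ^ 2 / 2 := by
    rw [← hθt]; field_simp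
  rw [hrhs]
  nlinarith [mul_le_mul_of_nonneg_left hc hθ₀,
    mul_le_mul_of_nonneg_right hm (by positivity : 0 ≤ a * θ ^ 2)]

lemma le_rpow_of_pow_le_exp {P x r : ℝ} {k : ℕ} (hx : 0 < x) (hk : k ≠ 0)
    (h : P ^ k ≤ Real.exp (k * (r * Real.log x))) : P ≤ x ^ r := by
  rw [Real.exp_nat_mul, mul_comm, ← Real.rpow_def_of_pos hx] at h
  exact le_of_pow_le_pow_left₀ hk (Real.rpow_nonneg hx.le r) h

noncomputable def expect (n : ℕ) (p s : ℝ) (X : ESpace n → ℝ) : ℝ :=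
  ∑ ω, prOmega n p s ω * X ω

noncomputable def inG1 (b : Bool × Bool × Bool) : ℝ :=
  if b.1 = true ∧ b.2.1 = true then 1 else 0

noncomputable def inG2 (b : Bool × Bool × Bool) : ℝ :=
  if b.1 = true ∧ b.2.2 = true then 1 else 0

section EdgeMeasure

variable {n : ℕ} {p s : ℝ}

lemma sum_wt : ∑ b, wt p s b = 1 := by
  simp [wt, Fintype.sum_prod_type]; ring

lemma sum_wt_mul_inG1 : ∑ b, wt p s b * inG1 b = p * s := by
  simp [wt, inG1, Fintype.sum_prod_type]; ring

lemma sum_wt_mul_inG2 : ∑ b, wt p s b * inG2 b = p * s := by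
  simp [wt, inG2, Fintype.sum_prod_type]; ring

lemma prOmega_nonneg (hp : p ∈ Set.Icc (0 : ℝ) 1) (hs : s ∈ Set.Icc (0 : ℝ) 1)
    (ω : ESpace n) : 0 ≤ prOmega n p s ω := by
  obtain ⟨hp₀, hp₁⟩ := hp
  obtain ⟨hs₀, hs₁⟩ := hs
  refine prod_nonneg fun e _ => ?_
  unfold wt
  split_ifs <;> exact mul_nonneg (mul_nonneg (by linarith) (by linarith)) (by linarith)

lemma pr_nonneg (hp : p ∈ Set.Icc (0 : ℝ) 1) (hs : s ∈ Set.Icc (0 : ℝ) 1)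
    (E : Set (ESpace n)) : 0 ≤ Pr n p s E :=
  sum_nonneg fun ω _ => Set.indicator_nonneg (fun ω _ => prOmega_nonneg hp hs ω) ω

lemma pr_le_expect (hp : p ∈ Set.Icc (0 : ℝ) 1) (hs : s ∈ Set.Icc (0 : ℝ) 1)
    {E : Set (ESpace n)} {g : ESpace n → ℝ} (hg : ∀ ω, 0 ≤ g ω) (hgE : ∀ ω ∈ E, 1 ≤ g ω) :
    Pr n p s E ≤ expect n p s g := by
  refine sum_le_sum fun ω _ => ?_
  have hω := prOmega_nonneg hp hs ω
  by_cases hmem : ω ∈ E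
  · rw [Set.indicator_of_mem hmem]
    exact le_mul_of_one_le_right hω (hgE ω hmem)
  · rw [Set.indicator_of_notMem hmem]
    exact mul_nonneg hω (hg ω)

lemma expect_prod_eq_prod_sum (g : Sym2 (Fin n) → Bool × Bool × Bool → ℝ) :
    expect n p s (fun ω => ∏ e, g e (ω e)) = ∏ e, ∑ b, wt p s b * g e b := by
  simp_rw [expect, prOmega, ← prod_mul_distrib]
  exact (Fintype.prod_sum fun e b => wt p s b * g e b).symm

lemma sum_prOmega : ∑ ω : ESpace n, prOmega n p s ω = 1 := by
  simpa [expect, sum_wt] using expect_prod_eq_prod_sum (n := n) (p := p) (s := s) fun _ _ => 1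

lemma expect_sum {ι : Type*} (T : Finset ι) (X : ι → ESpace n → ℝ) :
    expect n p s (fun ω => ∑ i ∈ T, X i ω) = ∑ i ∈ T, expect n p s (X i) := by
  simp_rw [expect, mul_sum]
  exact sum_comm

lemma expect_const_mul (c : ℝ) (X : ESpace n → ℝ) :
    expect n p s (fun ω => c * X ω) = c * expect n p s X := by
  simp_rw [expect, mul_sum, mul_left_comm]

lemma expect_prod_inG1_mul_prod_inG2 {A B : Finset (Sym2 (Fin n))} (hAB : Disjoint A B) :
    expect n p s (fun ω => (∏ e ∈ A, inG1 (ω e)) * ∏ e ∈ B, inG2 (ω e)) =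
      (p * s) ^ (#A + #B) := by
  have hfactor : ∀ ω : ESpace n, (∏ e ∈ A, inG1 (ω e)) * ∏ e ∈ B, inG2 (ω e) =
      ∏ e, (if e ∈ A then inG1 (ω e) else 1) * (if e ∈ B then inG2 (ω e) else 1) := by
    intro ω
    rw [prod_mul_distrib, prod_ite_mem, prod_ite_mem, univ_inter, univ_inter]
  have hedge : ∀ e, ∑ b, wt p s b *
      ((if e ∈ A then inG1 b else 1) * (if e ∈ B then inG2 b else 1)) =
        if e ∈ A ∪ B then p * s else 1 := by
    intro e
    by_cases hA : e ∈ A <;> by_cases hB : e ∈ B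
    · exact absurd hB (disjoint_left.mp hAB hA)
    all_goals simp [hA, hB, sum_wt_mul_inG1, sum_wt_mul_inG2, sum_wt]
  simp_rw [hfactor]
  rw [expect_prod_eq_prod_sum fun e b =>
    (if e ∈ A then inG1 b else 1) * (if e ∈ B then inG2 b else 1)]
  simp_rw [hedge]
  rw [prod_ite_mem, univ_inter, prod_const, card_union_of_disjoint hAB]

end EdgeMeasure

noncomputable def witness {n : ℕ} (π : Equiv.Perm (Fin n)) (u i : Fin n) (ω : ESpace n) : ℝ :=
  A1 n ω u i * B1 n ω u (π i)

section Witness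

variable {n : ℕ} {p s : ℝ} {π : Equiv.Perm (Fin n)} {u : Fin n}

lemma A1_eq_inG1 (ω : ESpace n) {i : Fin n} (h : u ≠ i) : A1 n ω u i = inG1 (ω s(u, i)) := by
  simp [A1, inG1, G1, h]

lemma B1_eq_inG2 (ω : ESpace n) {i : Fin n} (h : u ≠ i) : B1 n ω u i = inG2 (ω s(u, i)) := by
  simp [B1, inG2, G2, h]

lemma witness_eq_zero_or_one (i : Fin n) (ω : ESpace n) :
    witness π u i ω = 0 ∨ witness π u i ω = 1 := by
  unfold witness A1 B1
  split_ifs <;> simp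

lemma exp_neg_mul_witness (θ : ℝ) (i : Fin n) (ω : ESpace n) :
    Real.exp (-θ * witness π u i ω) = 1 + (Real.exp (-θ) - 1) * witness π u i ω := by
  rcases witness_eq_zero_or_one (π := π) (u := u) i ω with h | h <;> simp [h]

lemma prod_witness_eq {T : Finset (Fin n)} (hu : u ∉ T) (hπu : π.symm u ∉ T) (ω : ESpace n) :
    ∏ i ∈ T, witness π u i ω =
      (∏ e ∈ T.image fun i => s(u, i), inG1 (ω e)) *
        ∏ e ∈ T.image fun i => s(u, π i), inG2 (ω e) := by
  rw [prod_image fun x _ y _ h => Sym2.congr_right.mp h,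
    prod_image fun x _ y _ h => π.injective (Sym2.congr_right.mp h), ← prod_mul_distrib]
  refine prod_congr rfl fun i hi => ?_
  have hπi : u ≠ π i := fun h => hπu (by rwa [h, Equiv.symm_apply_apply])
  rw [witness, A1_eq_inG1 ω (ne_of_mem_of_not_mem hi hu).symm, B1_eq_inG2 ω hπi]

lemma expect_prod_one_add_mul_witness {C : Finset (Fin n)} (hu : u ∉ C) (hπu : π.symm u ∉ C)
    (hsep : ∀ i ∈ C, π i ∉ C) (c : ℝ) :
    expect n p s (fun ω => ∏ i ∈ C, (1 + c * witness π u i ω)) =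
      (1 + c * (p * s) ^ 2) ^ #C := by
  have hterm : ∀ T ∈ C.powerset,
      expect n p s (fun ω => ∏ i ∈ T, c * witness π u i ω) = (c * (p * s) ^ 2) ^ #T := by
    intro T hT
    have hTC := mem_powerset.mp hT
    have hdisj : Disjoint (T.image fun i => s(u, i)) (T.image fun i => s(u, π i)) := by
      simp only [disjoint_left, mem_image, not_exists, not_and]
      rintro _ ⟨x, hx, rfl⟩ y hy hxy
      rcases Sym2.eq_iff.mp hxy with ⟨-, h⟩ | ⟨-, h⟩
      · exact hsep y (hTC hy) (by rw [h]; exact hTC hx)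
      · exact hπu (by rw [π.symm_apply_eq.mpr h.symm]; exact hTC hy)
    simp_rw [prod_mul_distrib, prod_const, prod_witness_eq (fun h => hu (hTC h))
      (fun h => hπu (hTC h)), expect_const_mul, expect_prod_inG1_mul_prod_inG2 hdisj,
      card_image_of_injective _ (fun x y h => Sym2.congr_right.mp h),
      card_image_of_injective _ (fun x y h => π.injective (Sym2.congr_right.mp h))]
    ring
  simp_rw [prod_one_add, expect_sum, sum_congr rfl hterm]
  rw [add_comm 1, ← sum_pow_mul_eq_add_pow]
  simp

lemma expect_exp_neg_mul_sum_witness {C : Finset (Fin n)} (hu : u ∉ C) (hπu : π.symm u ∉ C)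
    (hsep : ∀ i ∈ C, π i ∉ C) (θ : ℝ) :
    expect n p s (fun ω => Real.exp (-θ * ∑ i ∈ C, witness π u i ω)) =
      (1 + (Real.exp (-θ) - 1) * (p * s) ^ 2) ^ #C := by
  simp_rw [mul_sum, Real.exp_sum, exp_neg_mul_witness]
  exact expect_prod_one_add_mul_witness hu hπu hsep _

theorem pr_sum_witness_le_pow_four_le (hp : p ∈ Set.Icc (0 : ℝ) 1) (hs : s ∈ Set.Icc (0 : ℝ) 1)
    {I : Finset (Fin n)} (hu : u ∉ I) (hπu : π.symm u ∉ I) (hfix : ∀ i ∈ I, π i ≠ i)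
    (c : ℝ) {θ : ℝ} (hθ : 0 ≤ θ) :
    Pr n p s {ω | ∑ i ∈ I, witness π u i ω ≤ c} ^ 4 ≤
      Real.exp (θ * c) * (1 + (Real.exp (-θ) - 1) * (p * s) ^ 2) ^ #I := by
  obtain ⟨f, hf⟩ := exists_fin_three_coloring π I
  set C : Fin 3 → Finset (Fin n) := fun k => {i ∈ I | f i = k}
  -- Markov is applied at `θ / 4`, so that Hölder's fourth powers bring back `θ`.
  set X : Fin 3 → ESpace n → ℝ := fun k ω => Real.exp (-(θ / 4) * ∑ i ∈ C k, witness π u i ω)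
  have hX : ∀ k, expect n p s (fun ω => X k ω ^ 4) =
      (1 + (Real.exp (-θ) - 1) * (p * s) ^ 2) ^ #(C k) := by
    intro k
    have hsep : ∀ i ∈ C k, π i ∉ C k := by
      intro i hi hπi
      simp only [C, mem_filter] at hi hπi
      exact hf i hi.1 hπi.1 (hfix i hi.1) (hπi.2.trans hi.2.symm)
    simp_rw [X, ← Real.exp_nat_mul]
    convert expect_exp_neg_mul_sum_witness (fun h => hu (filter_subset _ _ h))
      (fun h => hπu (filter_subset _ _ h)) hsep θ using 4
    push_cast
    ring
  have hmarkov : Pr n p s {ω | ∑ i ∈ I, witness π u i ω ≤ c} ≤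
      expect n p s (fun ω => Real.exp (θ / 4 * c) * (X 0 ω * X 1 ω * X 2 ω)) := by
    refine pr_le_expect hp hs (fun ω => by positivity) fun ω hω => ?_
    rw [Set.mem_ofPred_eq, ← sum_fiberwise I f, Fin.sum_univ_three] at hω
    simp only [X, ← Real.exp_add]
    exact Real.one_le_exp (by nlinarith)
  have hholder := sum_mul_mul_mul_pow_four_le univ
    (fun ω _ => prOmega_nonneg hp hs ω) sum_prOmega (X 0) (X 1) (X 2)
  have hcard : #(C 0) + (#(C 1) + #(C 2)) = #I := by
    rw [← add_assoc, ← Fin.sum_univ_three (fun k => #(C k)),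
      ← card_eq_sum_card_fiberwise fun i _ => mem_univ (f i)]
  calc Pr n p s {ω | ∑ i ∈ I, witness π u i ω ≤ c} ^ 4
      ≤ expect n p s (fun ω => Real.exp (θ / 4 * c) * (X 0 ω * X 1 ω * X 2 ω)) ^ 4 :=
        pow_le_pow_left₀ (pr_nonneg hp hs _) hmarkov 4
    _ = Real.exp (θ * c) * expect n p s (fun ω => X 0 ω * X 1 ω * X 2 ω) ^ 4 := by
        rw [expect_const_mul, mul_pow, ← Real.exp_nat_mul]
        ring_nf
    _ ≤ Real.exp (θ * c) * (expect n p s (fun ω => X 0 ω ^ 4) *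
          (expect n p s (fun ω => X 1 ω ^ 4) * expect n p s (fun ω => X 2 ω ^ 4))) := by
        gcongr
        exact hholder
    _ = Real.exp (θ * c) * (1 + (Real.exp (-θ) - 1) * (p * s) ^ 2) ^ #I := by
        rw [hX 0, hX 1, hX 2, ← pow_add, ← pow_add, hcard]

end Witness

def wrongSeeds {n : ℕ} (π : Equiv.Perm (Fin n)) (u : Fin n) : Finset (Fin n) :=
  univ \ ((univ.filter fun i => π i = i) ∪ {u, π.symm u})

lemma sub_two_le_card_wrongSeeds {n : ℕ} (π : Equiv.Perm (Fin n)) (u : Fin n) :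
    (n : ℝ) - fixedCount n π - 2 ≤ #(wrongSeeds π u) := by
  have hcompl : #(wrongSeeds π u) + #((univ.filter fun i => π i = i) ∪ {u, π.symm u}) = n := by
    rw [wrongSeeds, card_sdiff_add_card_eq_card (subset_univ _), card_univ, Fintype.card_fin]
  have hunion := (card_union_le (univ.filter fun i => π i = i) {u, π.symm u}).trans
    (Nat.add_le_add_left card_le_two _)
  have hle : n ≤ #(wrongSeeds π u) + fixedCount n π + 2 := by unfold fixedCount; omega
  have hle' : (n : ℝ) ≤ #(wrongSeeds π u) + fixedCount n π + 2 := by exact_mod_cast hle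
  linarith

theorem dependent_sum_bound_general (n : ℕ) (p s β : ℝ)
    (hp : p ∈ Set.Ioo (0 : ℝ) 1) (hs : s ∈ Set.Ioc (0 : ℝ) 1)
    (π : Equiv.Perm (Fin n)) (hfix : (fixedCount n π : ℝ) = β * n) (u : Fin n) :
    Pr n p s {ω |
        ∑ i ∈ univ \ ((univ.filter fun i => π i = i) ∪ {u, π.symm u}),
            A1 n ω u i * B1 n ω u (π i)
          ≤ ((n : ℝ) * (1 - β) - 2) * p ^ 2 * s ^ 2
              - 5 * Real.sqrt ((n : ℝ) * p ^ 2 * s ^ 2 * Real.log n) - 25 / 3 * Real.log n}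
      ≤ (n : ℝ) ^ (-(8 / 3 : ℝ)) := by
  obtain ⟨hp₀, hp₁⟩ := hp
  obtain ⟨hs₀, hs₁⟩ := hs
  have hn : (1 : ℝ) ≤ n := by exact_mod_cast Fin.pos u
  have ha : 0 < (p * s) ^ 2 := by positivity
  have ha₁ : (p * s) ^ 2 ≤ 1 := pow_le_one₀ (by positivity) (mul_le_one₀ hp₁.le hs₀.le hs₁)
  set L := Real.log n
  have hL : 0 ≤ L := Real.log_nonneg hn
  set t := 5 * Real.sqrt (n * p ^ 2 * s ^ 2 * L) + 25 / 3 * L with ht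
  have ht₀ : 0 ≤ t := by positivity
  have htL : 25 / 2 * L ≤ t ^ 2 / (2 * (n * (p * s) ^ 2)) := by
    have hsq := Real.sq_sqrt (by positivity : (0 : ℝ) ≤ n * p ^ 2 * s ^ 2 * L)
    rw [le_div_iff₀ (by positivity)]
    nlinarith [Real.sqrt_nonneg (n * p ^ 2 * s ^ 2 * L)]
  have hm : (n : ℝ) * (1 - β) - 2 ≤ #(wrongSeeds π u) := by
    linarith [sub_two_le_card_wrongSeeds π u]
  have hm' : (#(wrongSeeds π u) : ℝ) ≤ n := by
    exact_mod_cast card_le_univ _ |>.trans_eq (Fintype.card_fin n)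
  have hθ : 0 ≤ t / (n * (p * s) ^ 2) := by positivity
  refine le_rpow_of_pow_le_exp (by positivity) four_ne_zero ?_
  calc _ ≤ _ := pr_sum_witness_le_pow_four_le ⟨hp₀.le, hp₁.le⟩ ⟨hs₀.le, hs₁⟩ (π := π) (u := u)
        (by simp) (by simp) (fun i hi => by simp_all [wrongSeeds]) _ hθ
    _ ≤ _ := by gcongr; exact one_add_exp_neg_sub_one_mul_pow_le ha.le ha₁ hθ _
    _ = _ := (Real.exp_add _ _).symm
    _ ≤ Real.exp (-(t ^ 2 / (2 * (n * (p * s) ^ 2)))) := Real.exp_le_exp.mpr <|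
        chernoff_exponent_le (by positivity) ha.le hm' ht₀
          (by nlinarith [mul_le_mul_of_nonneg_right hm ha.le])
    _ ≤ _ := Real.exp_le_exp.mpr (by push_cast; linarith)

/-- eq. (5.7): concentration of the dependent sum of incorrect-seed
1-hop witness indicators for a true pair. -/
theorem dependent_sum_bound (n : ℕ) (p s β : ℝ)
    (hp : p ∈ Set.Ioo (0 : ℝ) 1) (hs : s ∈ Set.Ioc (0 : ℝ) 1) (hβ : β ∈ Set.Ico (0 : ℝ) 1)
    (π : Equiv.Perm (Fin n)) (hfix : (fixedCount n π : ℝ) = β * n) (u : Fin n) :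
    Pr n p s {ω |
        ∑ i ∈ univ \ ((univ.filter fun i => π i = i) ∪ {u, π.symm u}),
            A1 n ω u i * B1 n ω u (π i)
          ≤ ((n : ℝ) * (1 - β) - 2) * p ^ 2 * s ^ 2
              - 5 * Real.sqrt ((n : ℝ) * p ^ 2 * s ^ 2 * Real.log n) - 25 / 3 * Real.log n}
      ≤ (n : ℝ) ^ (-(8 / 3 : ℝ)) :=
  dependent_sum_bound_general n p s β hp hs π hfix u

end SeededGraphMatching
end

section
/- (Correctness of greedy maximum-weight matching under the pairwise criterion.) Let n be a positive integer and let W : [n]×[n] → ℝ be a weight matrix such that for every pair of distinct u, v ∈ [n], W(u,u) > W(u,v) or W(v,v) > W(u,v). Then every greedy maximum-weight matching sequence (u_1,v_1),…,(u_n,v_n) for W satisfies u_k = v_k for every k ∈ [n]. -/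
namespace SeededGraphMatching

/-- `(u 0, v 0), …, (u (n-1), v (n-1))` is a greedy maximum-weight matching sequence for the
weight matrix `W`: the `u k` are pairwise distinct, the `v k` are pairwise distinct, and
at each step `k` the chosen pair has maximal weight among all still-available pairs. -/
def GreedySeq (n : ℕ) (W : Fin n → Fin n → ℝ) (u v : Fin n → Fin n) : Prop :=
  Function.Injective u ∧ Function.Injective v ∧
    ∀ k x y : Fin n, (∀ j, j < k → u j ≠ x) → (∀ j, j < k → v j ≠ y) →
      W x y ≤ W (u k) (v k)

/-- correctness of greedy maximum-weight matching under the pairwise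
criterion. -/
theorem greedy_correct (n : ℕ) (hn : 0 < n) (W : Fin n → Fin n → ℝ)
    (hW : ∀ u v : Fin n, u ≠ v → W u u > W u v ∨ W v v > W u v)
    (u v : Fin n → Fin n) (hg : GreedySeq n W u v) :
    ∀ k, u k = v k := by
  obtain ⟨hu, hv, hmax⟩ := hg
  have main : ∀ m : ℕ, ∀ k : Fin n, k.val = m → u k = v k := by
    intro m
    induction m using Nat.strong_induction_on with
    | _ m ih =>
      intro k hk
      by_contra hne
      have hdiag : ∀ j : Fin n, j < k → u j = v j := fun j hj =>
        ih j.val (hk ▸ hj) j rfl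
      rcases hW (u k) (v k) hne with h | h
      · have hle := hmax k (u k) (u k)
          (fun j hj => hu.ne (Fin.ne_of_lt hj))
          (fun j hj => (hdiag j hj) ▸ hu.ne (Fin.ne_of_lt hj))
        exact absurd hle (not_le.mpr h)
      · have hle := hmax k (v k) (v k)
          (fun j hj => (hdiag j hj).symm ▸ hv.ne (Fin.ne_of_lt hj))
          (fun j hj => hv.ne (Fin.ne_of_lt hj))
        exact absurd hle (not_le.mpr h)
  exact fun k => main k.val k rfl

end SeededGraphMatching
end

section
/- (Theorem C.4, a Bernoulli-type logarithmic inequality.) For every real r ≥ 0 and every real x ∈ (0,1) with r·x ≤ 1, one has r·log(1−x) ≤ log(1 − r·x/2). -/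
namespace SeededGraphMatching

/-- Theorem C.4: a Bernoulli-type logarithmic inequality. -/
theorem bernoulli_log_inequality (r x : ℝ) (hr : 0 ≤ r) (hx : x ∈ Set.Ioo (0 : ℝ) 1)
    (hrx : r * x ≤ 1) :
    r * Real.log (1 - x) ≤ Real.log (1 - r * x / 2) := by
  obtain ⟨hx0, hx1⟩ := hx
  set t := r * x with ht
  have ht0 : 0 ≤ t := mul_nonneg hr hx0.le
  have htpos : (0:ℝ) < 1 - t / 2 := by linarith
  -- Step 1: log(1-x) ≤ -x
  have h1 : Real.log (1 - x) ≤ -x := by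
    have := Real.log_le_sub_one_of_pos (by linarith : (0:ℝ) < 1 - x)
    linarith
  have h2 : r * Real.log (1 - x) ≤ -t := by
    have := mul_le_mul_of_nonneg_left h1 hr
    simpa [ht, mul_neg] using this
  -- Step 2: -t ≤ log(1 - t/2)
  have h3 : -t ≤ Real.log (1 - t / 2) := by
    rw [Real.le_log_iff_exp_le htpos, Real.exp_neg]
    have he : t + 1 ≤ Real.exp t := Real.add_one_le_exp t
    have hep : (0:ℝ) < Real.exp t := Real.exp_pos t
    rw [inv_le_iff_one_le_mul₀ hep]
    nlinarith
  linarith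

end SeededGraphMatching
end
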